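/- arXiv:2304.04397 — 2 statements merged into one kernel-verified Lean document; each statement's English description precedes it below -/
import Mathlib

section
/- Let A, B ∈ ℝ^{n×n}, and define D_A = diag(exp(A)·1_n) and D_B = diag(exp(B)·1_n), where exp is applied entrywise. Suppose c₁, c₂, r > 0 and: (1) for all i, |（D_A)_{i,i} - (D_B)_{i,i}| ≤ c₁·r·min{(D_A)_{i,i}, (D_B)_{i,i}}; (2) for all i, j, |exp(A_{i,j}) - exp(B_{i,j})| ≤ c₂·r·min{exp(A_{i,j}), exp(B_{i,j})}. Then ‖D_A⁻¹ exp(A) - D_B⁻¹ exp(B)‖_∞ ≤ (c₁ + c₂)·r, where ‖M‖_∞ = max_{i,j} |M_{i,j}|. -/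
/-! The softmax entry `a / s` moves by the relative change of its numerator plus, since
`a / s - b / t = (a - b) / s + (b / t) * ((t - s) / s)` with `0 < b / t ≤ 1`, the relative
change of its denominator. -/

lemma abs_sub_le_mul_of_min_le {x y u ε : ℝ} (h : |x - y| ≤ ε * min x y) (hpos : 0 < min x y)
    (hu : min x y ≤ u) : |x - y| ≤ ε * u :=
  have hε : 0 ≤ ε := nonneg_of_mul_nonneg_left ((abs_nonneg _).trans h) hpos
  h.trans (mul_le_mul_of_nonneg_left hu hε)

lemma abs_div_sub_div_le {a b s t δ ε : ℝ} (ha : 0 < a) (hb : 0 < b) (has : a ≤ s) (hbt : b ≤ t)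
    (hab : |a - b| ≤ ε * min a b) (hst : |s - t| ≤ δ * min s t) :
    |a / s - b / t| ≤ δ + ε := by
  have hs : 0 < s := ha.trans_le has
  have ht : 0 < t := hb.trans_le hbt
  have hsplit : a / s - b / t = (a - b) / s + b / t * ((t - s) / s) := by
    field_simp
    ring
  have hnum : |(a - b) / s| ≤ ε := by
    rw [abs_div, abs_of_pos hs, div_le_iff₀ hs]
    exact abs_sub_le_mul_of_min_le hab (lt_min ha hb) ((min_le_left _ _).trans has)
  have hden : |(t - s) / s| ≤ δ := by
    rw [abs_div, abs_of_pos hs, div_le_iff₀ hs, abs_sub_comm]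
    exact abs_sub_le_mul_of_min_le hst (lt_min hs ht) (min_le_left _ _)
  have hratio : |b / t| ≤ 1 := by
    rw [abs_of_pos (div_pos hb ht)]
    exact (div_le_one ht).2 hbt
  calc |a / s - b / t| ≤ |(a - b) / s| + |b / t| * |(t - s) / s| := by
        rw [hsplit, ← abs_mul]
        exact abs_add_le _ _
    _ ≤ ε + 1 * δ := by gcongr
    _ = δ + ε := by ring

theorem perturb_attention_general {n : ℕ} (A B : Matrix (Fin n) (Fin n) ℝ) (c₁ c₂ r : ℝ)
    (h₁ : ∀ i : Fin n,
      |(∑ j, Real.exp (A i j)) - (∑ j, Real.exp (B i j))| ≤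
        c₁ * r * min (∑ j, Real.exp (A i j)) (∑ j, Real.exp (B i j)))
    (h₂ : ∀ i j : Fin n,
      |Real.exp (A i j) - Real.exp (B i j)| ≤
        c₂ * r * min (Real.exp (A i j)) (Real.exp (B i j))) :
    ∀ i j : Fin n,
      |Real.exp (A i j) / (∑ k, Real.exp (A i k)) -
        Real.exp (B i j) / (∑ k, Real.exp (B i k))| ≤ (c₁ + c₂) * r := by
  intro i j
  have hexp_le_sum (M : Matrix (Fin n) (Fin n) ℝ) : Real.exp (M i j) ≤ ∑ k, Real.exp (M i k) :=
    Finset.single_le_sum (f := fun k => Real.exp (M i k)) (fun k _ => (Real.exp_pos _).le)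
      (Finset.mem_univ j)
  rw [add_mul]
  exact abs_div_sub_div_le (Real.exp_pos _) (Real.exp_pos _) (hexp_le_sum A) (hexp_le_sum B)
    (h₂ i j) (h₁ i)

theorem perturb_attention {n : ℕ} (A B : Matrix (Fin n) (Fin n) ℝ) (c₁ c₂ r : ℝ)
    (hc₁ : 0 < c₁) (hc₂ : 0 < c₂) (hr : 0 < r)
    (h₁ : ∀ i : Fin n,
      |(∑ j, Real.exp (A i j)) - (∑ j, Real.exp (B i j))| ≤
        c₁ * r * min (∑ j, Real.exp (A i j)) (∑ j, Real.exp (B i j)))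
    (h₂ : ∀ i j : Fin n,
      |Real.exp (A i j) - Real.exp (B i j)| ≤
        c₂ * r * min (Real.exp (A i j)) (Real.exp (B i j))) :
    ∀ i j : Fin n,
      |Real.exp (A i j) / (∑ k, Real.exp (A i k)) -
        Real.exp (B i j) / (∑ k, Real.exp (B i k))| ≤ (c₁ + c₂) * r :=
  perturb_attention_general A B c₁ c₂ r h₁ h₂
end

section
/- Let X ∈ ℝ^{n×d} with ‖XX⊤‖_∞ ≤ r for some r ∈ (0, 0.1), and let Y ∈ ℝ^{n×m} satisfy (1-ε)·XX⊤ ⪯ YY⊤ ⪯ (1+ε)·XX⊤ for some ε ∈ (0,1). Then ‖D(Y)⁻¹ exp(YY⊤) - D(X)⁻¹ exp(XX⊤)‖_∞ ≤ 24r, where D(Z) := diag(exp(ZZ⊤)·1_n) and exp is applied entrywise. -/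
/-!
The two Loewner inequalities say that `P = YYᵀ - (1-ε)XXᵀ` and `Q = (1+ε)XXᵀ - YYᵀ` are
positive semidefinite with `P + Q = 2εXXᵀ`. Hence the diagonal of `P` is at most `2εr`, so
every entry of `P` is at most `2εr` in absolute value, and every entry of
`YYᵀ - XXᵀ = P - εXXᵀ` is at most `3εr ≤ 3r`. Perturbing the logits of a softmax by at most
`δ` changes each weight by a factor in `[e^{-2δ}, e^{2δ}]`, hence by at most
`e^{2δ} - 1 ≤ 8δ` when `δ ≤ 3/8`.
-/

open Matrix Real

lemma Matrix.PosSemidef.abs_apply_le {ι : Type*} [Fintype ι] {P : Matrix ι ι ℝ}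
    (hP : P.PosSemidef) (k l : ι) : |P k l| ≤ (P k k + P l l) / 2 := by
  classical
  have hsymm : P l k = P k l := by simpa using congrFun (congrFun hP.1 k) l
  have quad (c : ℝ) : 0 ≤ P k k + 2 * c * P k l + c ^ 2 * P l l := by
    have h := hP.dotProduct_mulVec_nonneg (Pi.single k 1 + c • Pi.single l 1)
    simp only [star_trivial, add_dotProduct, dotProduct_add, smul_dotProduct, dotProduct_smul,
      mulVec_add, mulVec_smul, single_dotProduct, mulVec_single, smul_eq_mul, col_apply,
      MulOpposite.op_one, one_smul, hsymm] at h
    linarith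
  rw [abs_le]
  constructor <;> linarith [quad 1, quad (-1)]

lemma abs_sub_apply_le_of_loewner {ι : Type*} [Fintype ι] {A B : Matrix ι ι ℝ} {r ε : ℝ}
    (hε : 0 ≤ ε) (hA : ∀ k l, |A k l| ≤ r)
    (h₁ : (B - (1 - ε) • A).PosSemidef) (h₂ : ((1 + ε) • A - B).PosSemidef) (k l : ι) :
    |B k l - A k l| ≤ 3 * ε * r := by
  have diag_le (k : ι) : (B - (1 - ε) • A) k k ≤ 2 * ε * r := by
    have hQ : 0 ≤ ((1 + ε) • A - B) k k := h₂.diag_nonneg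
    have hAk : ε * A k k ≤ ε * r := mul_le_mul_of_nonneg_left (abs_le.mp (hA k k)).2 hε
    simp only [Matrix.sub_apply, Matrix.smul_apply, smul_eq_mul] at hQ ⊢
    linarith
  have hP : |(B - (1 - ε) • A) k l| ≤ 2 * ε * r :=
    (h₁.abs_apply_le k l).trans (by linarith [diag_le k, diag_le l])
  have hAkl : |ε * A k l| ≤ ε * r := by
    rw [abs_mul, abs_of_nonneg hε]
    exact mul_le_mul_of_nonneg_left (hA k l) hε
  calc |B k l - A k l| = |(B - (1 - ε) • A) k l - ε * A k l| := by
        simp only [Matrix.sub_apply, Matrix.smul_apply, smul_eq_mul]; ring_nf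
    _ ≤ |(B - (1 - ε) • A) k l| + |ε * A k l| := abs_sub _ _
    _ ≤ 2 * ε * r + ε * r := add_le_add hP hAkl
    _ = 3 * ε * r := by ring

noncomputable def softmax {ι : Type*} [Fintype ι] (a : ι → ℝ) (j : ι) : ℝ :=
  exp (a j) / ∑ k, exp (a k)

section Softmax

variable {ι : Type*} [Fintype ι] {a b : ι → ℝ} {δ : ℝ}

lemma sum_exp_pos (a : ι → ℝ) (j : ι) : 0 < ∑ k, exp (a k) :=
  Finset.sum_pos (fun _ _ => exp_pos _) ⟨j, Finset.mem_univ j⟩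

lemma softmax_pos (a : ι → ℝ) (j : ι) : 0 < softmax a j :=
  div_pos (exp_pos _) (sum_exp_pos a j)

lemma softmax_le_one (a : ι → ℝ) (j : ι) : softmax a j ≤ 1 :=
  (div_le_one (sum_exp_pos a j)).mpr <|
    Finset.single_le_sum (fun k _ => (exp_pos (a k)).le) (Finset.mem_univ j)

lemma softmax_le_exp_mul_softmax (h : ∀ k, |b k - a k| ≤ δ) (j : ι) :
    softmax b j ≤ exp (2 * δ) * softmax a j := by
  have exp_le (x y : ℝ) (hxy : |x - y| ≤ δ) : exp x ≤ exp δ * exp y := by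
    rw [← exp_add]
    exact exp_le_exp.mpr (by linarith [(abs_le.mp hxy).2])
  have hsum : ∑ k, exp (a k) ≤ exp δ * ∑ k, exp (b k) := by
    rw [Finset.mul_sum]
    exact Finset.sum_le_sum fun k _ => exp_le _ _ (by rw [abs_sub_comm]; exact h k)
  unfold softmax
  rw [← mul_div_assoc, div_le_div_iff₀ (sum_exp_pos b j) (sum_exp_pos a j)]
  calc exp (b j) * ∑ k, exp (a k)
      ≤ (exp δ * exp (a j)) * (exp δ * ∑ k, exp (b k)) :=
        mul_le_mul (exp_le _ _ (h j)) hsum (sum_exp_pos a j).le (by positivity)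
    _ = exp (2 * δ) * exp (a j) * ∑ k, exp (b k) := by
        rw [two_mul, exp_add]; ring

lemma abs_softmax_sub_softmax_le (h : ∀ k, |b k - a k| ≤ δ) (j : ι) :
    |softmax b j - softmax a j| ≤ exp (2 * δ) - 1 := by
  have hδ : 0 ≤ δ := (abs_nonneg _).trans (h j)
  have h' : ∀ k, |a k - b k| ≤ δ := fun k => abs_sub_comm (a k) (b k) ▸ h k
  have hba := softmax_le_exp_mul_softmax h j
  have hab := softmax_le_exp_mul_softmax h' j
  have hF : 0 ≤ exp (2 * δ) - 1 := by linarith [one_le_exp (by linarith : 0 ≤ 2 * δ)]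
  have ha := mul_le_mul_of_nonneg_left (softmax_le_one a j) hF
  have hb := mul_le_mul_of_nonneg_left (softmax_le_one b j) hF
  rw [abs_le]
  constructor <;> nlinarith

end Softmax

lemma Real.exp_sub_one_le_four_mul {x : ℝ} (h0 : 0 ≤ x) (h1 : x ≤ 3 / 4) :
    exp x - 1 ≤ 4 * x := by
  have hx : 0 < 1 - x := by linarith
  have h := exp_bound_div_one_sub_of_interval h0 (by linarith)
  rw [le_div_iff₀ hx] at h
  nlinarith

theorem attention_sparsification {n d m : ℕ}
    (X : Matrix (Fin n) (Fin d) ℝ) (Y : Matrix (Fin n) (Fin m) ℝ) (r ε : ℝ)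
    (hr : 0 < r) (hr1 : r < 0.1) (hε : 0 < ε) (hε1 : ε < 1)
    (hX : ∀ i j, |(X * Xᵀ) i j| ≤ r)
    (h₁ : (Y * Yᵀ - (1 - ε) • (X * Xᵀ)).PosSemidef)
    (h₂ : ((1 + ε) • (X * Xᵀ) - Y * Yᵀ).PosSemidef) :
    ∀ i j : Fin n,
      |Real.exp ((Y * Yᵀ) i j) / (∑ k, Real.exp ((Y * Yᵀ) i k)) -
        Real.exp ((X * Xᵀ) i j) / (∑ k, Real.exp ((X * Xᵀ) i k))| ≤ 24 * r := by
  intro i j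
  have hclose (k : Fin n) : |(Y * Yᵀ) i k - (X * Xᵀ) i k| ≤ 3 * r :=
    (abs_sub_apply_le_of_loewner hε.le hX h₁ h₂ i k).trans (by nlinarith)
  calc |softmax ((Y * Yᵀ) i) j - softmax ((X * Xᵀ) i) j|
      ≤ exp (2 * (3 * r)) - 1 := abs_softmax_sub_softmax_le hclose j
    _ ≤ 4 * (2 * (3 * r)) := by
        norm_num at hr1
        exact exp_sub_one_le_four_mul (by linarith) (by linarith)
    _ = 24 * r := by ring
end
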